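/- arXiv:2105.14089 — 3 statements merged into one kernel-verified Lean document; each statement's English description precedes it below -/
import Mathlib

section
/- Let A be an n×n doubly stochastic matrix and W = I − (1/n)𝟏𝟏ᵀ the centering matrix. Then ‖AW‖_F² ≤ ‖W‖_F² = n − 1. -/
/-- The Frobenius norm of a real matrix. -/
noncomputable def frobeniusNorm {n d : ℕ} (M : Matrix (Fin n) (Fin d) ℝ) : ℝ :=
  Real.sqrt (∑ i, ∑ j, (M i j) ^ 2)

/-- The centering matrix `W = I − (1/n)𝟏𝟏ᵀ`. -/
noncomputable def centeringMatrix (n : ℕ) : Matrix (Fin n) (Fin n) ℝ :=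
  1 - ((n : ℝ))⁻¹ • Matrix.of (fun _ _ => (1 : ℝ))

lemma frob_sq {n d : ℕ} (M : Matrix (Fin n) (Fin d) ℝ) :
    frobeniusNorm M ^ 2 = ∑ i, ∑ j, (M i j) ^ 2 := by
  apply Real.sq_sqrt
  exact Finset.sum_nonneg fun i _ => Finset.sum_nonneg fun j _ => sq_nonneg _

lemma sum_sq_shift (n : ℕ) (hn : 1 ≤ n) (B : Matrix (Fin n) (Fin n) ℝ)
    (hrow : ∀ i, ∑ j, B i j = 1) :
    ∑ i, ∑ j, (B i j - (n : ℝ)⁻¹) ^ 2 = (∑ i, ∑ j, (B i j) ^ 2) - 1 := by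
  have hn' : (n : ℝ) ≠ 0 := Nat.cast_ne_zero.mpr (by omega)
  have h1 : ∀ i, ∑ j, (B i j - (n : ℝ)⁻¹) ^ 2
      = (∑ j, (B i j) ^ 2) - 2 * (n : ℝ)⁻¹ + n * (n : ℝ)⁻¹ ^ 2 := by
    intro i
    have : ∀ j, (B i j - (n : ℝ)⁻¹) ^ 2
        = (B i j) ^ 2 - 2 * (n : ℝ)⁻¹ * B i j + (n : ℝ)⁻¹ ^ 2 := by intro j; ring
    simp_rw [this, Finset.sum_add_distrib, Finset.sum_sub_distrib, ← Finset.mul_sum,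
      hrow i, Finset.sum_const, Finset.card_fin, nsmul_eq_mul]
    ring
  simp_rw [h1, Finset.sum_add_distrib, Finset.sum_sub_distrib, Finset.sum_const,
    Finset.card_fin, nsmul_eq_mul]
  field_simp
  ring

/-- For an `n×n` doubly stochastic matrix `A` and the centering matrix
`W = I − (1/n)𝟏𝟏ᵀ`, one has `‖AW‖_F² ≤ ‖W‖_F² = n − 1`. -/
theorem frobenius_centering_bound
    (n : ℕ) (hn : 1 ≤ n) (A : Matrix (Fin n) (Fin n) ℝ)
    (hA_nonneg : ∀ i j, 0 ≤ A i j)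
    (hA_row : ∀ i, ∑ j, A i j = 1) (hA_col : ∀ j, ∑ i, A i j = 1) :
    frobeniusNorm (A * centeringMatrix n) ^ 2 ≤ frobeniusNorm (centeringMatrix n) ^ 2 ∧
      frobeniusNorm (centeringMatrix n) ^ 2 = (n : ℝ) - 1 := by
  have hW : ∀ i j : Fin n, centeringMatrix n i j
      = (if i = j then (1 : ℝ) else 0) - (n : ℝ)⁻¹ := by
    intro i j
    simp [centeringMatrix, Matrix.one_apply, Matrix.sub_apply]
  have hAW : ∀ i j : Fin n, (A * centeringMatrix n) i j = A i j - (n : ℝ)⁻¹ := by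
    intro i j
    rw [Matrix.mul_apply]
    simp_rw [hW, mul_sub, Finset.sum_sub_distrib, ← Finset.sum_mul, hA_row i,
      mul_ite, mul_one, mul_zero, Finset.sum_ite_eq' Finset.univ j (A i),
      Finset.mem_univ, if_true, one_mul]
  have hWsq : frobeniusNorm (centeringMatrix n) ^ 2 = (n : ℝ) - 1 := by
    rw [frob_sq]
    have : ∑ i, ∑ j, (centeringMatrix n i j) ^ 2
        = (∑ i : Fin n, ∑ j, ((if i = j then (1:ℝ) else 0)) ^ 2) - 1 := by
      simp_rw [hW]
      exact sum_sq_shift n hn (Matrix.of fun i j => if i = j then (1:ℝ) else 0)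
        (fun i => by simp)
    rw [this]
    simp [Finset.sum_ite_eq]
  refine ⟨?_, hWsq⟩
  rw [hWsq, frob_sq]
  have : ∑ i, ∑ j, ((A * centeringMatrix n) i j) ^ 2
      = (∑ i, ∑ j, (A i j) ^ 2) - 1 := by
    simp_rw [hAW]
    exact sum_sq_shift n hn A hA_row
  rw [this]
  have hle : ∑ i, ∑ j, (A i j) ^ 2 ≤ (n : ℝ) := by
    calc ∑ i, ∑ j, (A i j) ^ 2 ≤ ∑ i, ∑ j, A i j := by
          refine Finset.sum_le_sum fun i _ => Finset.sum_le_sum fun j _ => ?_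
          have hle1 : A i j ≤ 1 := by
            rw [← hA_row i]
            exact Finset.single_le_sum (fun k _ => hA_nonneg i k) (Finset.mem_univ j)
          nlinarith [hA_nonneg i j]
      _ = n := by simp [hA_row]
  linarith
end

section
/- (Bound on the term A₁₂ in the proof of Lemma 2.) Let f : ℝ^d → ℝ be μ-strongly convex with L-Lipschitz gradient and minimizer x* (so ∇f(x*) = 0). Then for any points x̄, x_l ∈ ℝ^d: 2∇f(x̄)ᵀ(x* − x̄) ≤ 2(f(x*) − f(x_l)) − (3μ/4)‖x* − x̄‖² + (L + 4L²/μ)‖x_l − x̄‖². -/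
open scoped RealInnerProductSpace

/-!
Strong convexity at `x̄` bounds `⟪∇f x̄, x* − x̄⟫` by `f x* − f x̄ − (μ/2)‖x* − x̄‖²`, and the
descent lemma for the `L`-smooth `f` trades `f x̄` for `f x_l`, at the price of
`⟪∇f x̄, x_l − x̄⟫ + (L/2)‖x_l − x̄‖²`. Since `∇f x* = 0`, the Lipschitz bound gives
`⟪∇f x̄, x_l − x̄⟫ ≤ L‖x̄ − x*‖‖x_l − x̄‖`, and Young's inequality with weight `μ/4` splits this
product into `(μ/8)‖x* − x̄‖² + (2L²/μ)‖x_l − x̄‖²`.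
-/

section LipschitzGradient

variable {E : Type*} [NormedAddCommGroup E] [InnerProductSpace ℝ E] [CompleteSpace E]
  {f : E → ℝ} {L : ℝ}

lemma inner_gradient_sub_le_of_lipschitz
    (hlip : ∀ x y, ‖gradient f x - gradient f y‖ ≤ L * ‖x - y‖) (x y v : E) :
    ⟪gradient f x - gradient f y, v⟫ ≤ L * ‖x - y‖ * ‖v‖ :=
  (real_inner_le_norm _ _).trans (mul_le_mul_of_nonneg_right (hlip x y) (norm_nonneg v))

lemma hasDerivAt_comp_add_smul {x v : E} {t : ℝ} (hf : DifferentiableAt ℝ f (x + t • v)) :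
    HasDerivAt (fun s : ℝ => f (x + s • v)) ⟪gradient f (x + t • v), v⟫ t := by
  have hline : HasDerivAt (fun s : ℝ => x + s • v) v t := by
    simpa using ((hasDerivAt_id t).smul_const v).const_add x
  simpa [InnerProductSpace.toDual_apply_apply, Function.comp_def] using
    hf.hasGradientAt.hasFDerivAt.comp_hasDerivAt t hline

lemma le_add_inner_gradient_add_sq_of_lipschitz (hf : Differentiable ℝ f)
    (hlip : ∀ x y, ‖gradient f x - gradient f y‖ ≤ L * ‖x - y‖) (x y : E) :
    f x ≤ f y + ⟪gradient f y, x - y⟫ + L / 2 * ‖x - y‖ ^ 2 := by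
  set v := x - y
  have hφ (t : ℝ) := hasDerivAt_comp_add_smul (v := v) (t := t) (hf (y + t • v))
  have hB (t : ℝ) : HasDerivAt (fun s : ℝ => f y + s * ⟪gradient f y, v⟫ + L / 2 * s ^ 2 * ‖v‖ ^ 2)
      (⟪gradient f y, v⟫ + L * t * ‖v‖ ^ 2) t := by
    refine ((((hasDerivAt_id' t).mul_const ⟪gradient f y, v⟫).const_add (f y)).add
      (((hasDerivAt_pow 2 t).const_mul (L / 2)).mul_const (‖v‖ ^ 2))).congr_deriv ?_
    push_cast
    ring
  have hslope (t : ℝ) (ht : t ∈ Set.Ico (0 : ℝ) 1) :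
      ⟪gradient f (y + t • v), v⟫ ≤ ⟪gradient f y, v⟫ + L * t * ‖v‖ ^ 2 := by
    have := inner_gradient_sub_le_of_lipschitz hlip (y + t • v) y v
    rw [inner_sub_left, add_sub_cancel_left, norm_smul, Real.norm_of_nonneg ht.1] at this
    linarith
  have key := image_le_of_deriv_right_le_deriv_boundary
    (fun t _ => (hφ t).continuousAt.continuousWithinAt) (fun t _ => (hφ t).hasDerivWithinAt)
    (by simp) (fun t _ => (hB t).continuousAt.continuousWithinAt)
    (fun t _ => (hB t).hasDerivWithinAt) hslope (Set.right_mem_Icc.2 zero_le_one)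
  simpa [v] using key

end LipschitzGradient

lemma two_mul_mul_le_mul_sq_add_sq_div {ε : ℝ} (hε : 0 < ε) (c a b : ℝ) :
    2 * (c * a * b) ≤ ε * a ^ 2 + c ^ 2 / ε * b ^ 2 := by
  have : ε * a ^ 2 + c ^ 2 / ε * b ^ 2 - 2 * (c * a * b) = (ε * a - c * b) ^ 2 / ε := by
    field_simp
    ring
  linarith [div_nonneg (sq_nonneg (ε * a - c * b)) hε.le]

theorem A12_bound_general
    (d : ℕ) (μ L : ℝ) (hμ : 0 < μ)
    (f : EuclideanSpace ℝ (Fin d) → ℝ) (hdiff : Differentiable ℝ f)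
    (hsc : ∀ x y, μ / 2 * ‖x - y‖ ^ 2 ≤ f x - f y - ⟪gradient f y, x - y⟫)
    (hlip : ∀ x y, ‖gradient f x - gradient f y‖ ≤ L * ‖x - y‖)
    (xstar : EuclideanSpace ℝ (Fin d))
    (hgrad0 : gradient f xstar = 0)
    (xbar xl : EuclideanSpace ℝ (Fin d)) :
    2 * ⟪gradient f xbar, xstar - xbar⟫ ≤
      2 * (f xstar - f xl) - (3 * μ / 4) * ‖xstar - xbar‖ ^ 2 +
        (L + 4 * L ^ 2 / μ) * ‖xl - xbar‖ ^ 2 := by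
  have hstrong := hsc xstar xbar
  have hdescent := le_add_inner_gradient_add_sq_of_lipschitz hdiff hlip xl xbar
  have hcross : ⟪gradient f xbar, xl - xbar⟫ ≤ L * ‖xstar - xbar‖ * ‖xl - xbar‖ := by
    simpa [hgrad0, norm_sub_rev xbar xstar] using
      inner_gradient_sub_le_of_lipschitz hlip xbar xstar (xl - xbar)
  have hyoung := two_mul_mul_le_mul_sq_add_sq_div (by positivity : 0 < μ / 4) L
    ‖xstar - xbar‖ ‖xl - xbar‖
  rw [div_div_eq_mul_div, mul_comm (L ^ 2) 4] at hyoung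
  linarith

/-- **Bound on the term `A₁₂` in the proof of Lemma 2.**
Let `f : ℝ^d → ℝ` be `μ`-strongly convex with `L`-Lipschitz gradient and minimizer `x*`
(so `∇f(x*) = 0`).  Then for any `x̄, x_l`:
`2⟪∇f(x̄), x* − x̄⟫ ≤ 2(f(x*) − f(x_l)) − (3μ/4)‖x* − x̄‖² + (L + 4L²/μ)‖x_l − x̄‖²`. -/
theorem A12_bound
    (d : ℕ) (μ L : ℝ) (hμ : 0 < μ) (hL : 0 < L)
    (f : EuclideanSpace ℝ (Fin d) → ℝ) (hdiff : Differentiable ℝ f)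
    (hsc : ∀ x y, μ / 2 * ‖x - y‖ ^ 2 ≤ f x - f y - ⟪gradient f y, x - y⟫)
    (hlip : ∀ x y, ‖gradient f x - gradient f y‖ ≤ L * ‖x - y‖)
    (xstar : EuclideanSpace ℝ (Fin d))
    (hmin : ∀ x, f xstar ≤ f x) (hgrad0 : gradient f xstar = 0)
    (xbar xl : EuclideanSpace ℝ (Fin d)) :
    2 * ⟪gradient f xbar, xstar - xbar⟫ ≤
      2 * (f xstar - f xl) - (3 * μ / 4) * ‖xstar - xbar‖ ^ 2 +
        (L + 4 * L ^ 2 / μ) * ‖xl - xbar‖ ^ 2 :=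
  A12_bound_general d μ L hμ f hdiff hsc hlip xstar hgrad0 xbar xl
end

section
/- (Deterministic descent inequality at the core of Lemma 2.) Let f_1, …, f_n : ℝ^d → ℝ be differentiable with L-Lipschitz gradients, and suppose f := (1/n)Σ_{i=1}^n f_i is μ-strongly convex with minimizer x*. Let x₁, …, x_n ∈ ℝ^d, x̄ = (1/n)Σ_i x_i, and ḡ = (1/n)Σ_i ∇f_i(x_i). Then for every α ≥ 0 and every index l ∈ {1,…,n}: ‖x̄ − α ḡ − x*‖² ≤ (1 − (μ/2)α)‖x̄ − x*‖² + α²‖ḡ‖² + 2α(f(x*) − f(x_l)) + α(L + 4L²/μ)‖x_l − x̄‖² + α(4L²/μ) Σ_{i=1}^n ‖x_i − x̄‖². -/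
/-!
Write `A = ‖x̄ - x*‖` and `e = ‖∇f(x̄) - ḡ‖`. Expanding the square, everything reduces to a
lower bound on `⟪ḡ, x̄ - x*⟫ = ⟪∇f(x̄), x̄ - x*⟫ - ⟪∇f(x̄) - ḡ, x̄ - x*⟫`. Strong convexity bounds
the first term below by `f(x̄) - f(x*) + μ/2 A²`, and the descent lemma for the `L`-smooth `f`,
together with `‖∇f(x̄)‖ = ‖∇f(x̄) - ∇f(x*)‖ ≤ L A`, replaces `f(x̄)` by `f(x_l)` at the cost of terms in
`‖x_l - x̄‖`. The second term is at most `e A`, and `e² ≤ L² ∑ᵢ ‖xᵢ - x̄‖²` because `ḡ` averages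
gradients taken at the `xᵢ` instead of at `x̄`. Young's inequality with weight `μ/4` absorbs the
two cross terms `L A ‖x_l - x̄‖` and `e A` into half of the strong-convexity gain.
-/

open scoped RealInnerProductSpace

section Average

variable {E E' : Type*} [SeminormedAddCommGroup E] [SeminormedAddCommGroup E'] [NormedSpace ℝ E']
  {n : ℕ}

theorem norm_average_sub_average_le {g : Fin n → E → E'} {L : ℝ}
    (hg : ∀ i p q, ‖g i p - g i q‖ ≤ L * ‖p - q‖) (p q : Fin n → E) :
    ‖(n : ℝ)⁻¹ • ∑ i, g i (p i) - (n : ℝ)⁻¹ • ∑ i, g i (q i)‖ ≤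
      L * ((n : ℝ)⁻¹ * ∑ i, ‖p i - q i‖) := by
  rw [← smul_sub, ← Finset.sum_sub_distrib, norm_smul, Real.norm_of_nonneg (by positivity),
    mul_left_comm, Finset.mul_sum]
  gcongr
  exact (norm_sum_le _ _).trans (Finset.sum_le_sum fun i _ => hg i _ _)

theorem sq_norm_average_sub_average_le (hn : 0 < n) {g : Fin n → E → E'} {L : ℝ}
    (hg : ∀ i p q, ‖g i p - g i q‖ ≤ L * ‖p - q‖) (p q : Fin n → E) :
    ‖(n : ℝ)⁻¹ • ∑ i, g i (p i) - (n : ℝ)⁻¹ • ∑ i, g i (q i)‖ ^ 2 ≤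
      L ^ 2 * ∑ i, ‖p i - q i‖ ^ 2 := by
  have hjensen : ((n : ℝ)⁻¹ * ∑ i, ‖p i - q i‖) ^ 2 ≤ (∑ i, ‖p i - q i‖ ^ 2) / n := by
    simpa [inv_mul_eq_div] using
      sum_div_card_sq_le_sum_sq_div_card (s := Finset.univ) (f := fun i => ‖p i - q i‖)
  calc _ ≤ (L * ((n : ℝ)⁻¹ * ∑ i, ‖p i - q i‖)) ^ 2 :=
        pow_le_pow_left₀ (norm_nonneg _) (norm_average_sub_average_le hg p q) 2
    _ ≤ L ^ 2 * ((∑ i, ‖p i - q i‖ ^ 2) / n) := by rw [mul_pow]; gcongr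
    _ ≤ L ^ 2 * ∑ i, ‖p i - q i‖ ^ 2 := by
      gcongr
      exact div_le_self (by positivity) (by exact_mod_cast hn)

end Average

theorem two_mul_le_weighted_add_sq {μ : ℝ} (hμ : 0 < μ) (a b : ℝ) :
    2 * a * b ≤ μ / 4 * a ^ 2 + 4 / μ * b ^ 2 := by
  have : 0 ≤ (μ * a - 4 * b) ^ 2 / (4 * μ) := by positivity
  have hμ0 : μ ≠ 0 := hμ.ne'
  field_simp at this ⊢
  nlinarith [this]

section Gradient

variable {E : Type*} [NormedAddCommGroup E] [InnerProductSpace ℝ E] [CompleteSpace E]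

theorem le_add_inner_gradient_add_of_lipschitz_gradient {h : E → ℝ} {L : ℝ}
    (hd : Differentiable ℝ h) (hlip : ∀ a b, ‖gradient h a - gradient h b‖ ≤ L * ‖a - b‖)
    (a b : E) : h b ≤ h a + ⟪gradient h a, b - a⟫ + L / 2 * ‖b - a‖ ^ 2 := by
  set v := b - a
  let φ : ℝ → ℝ := fun t => h (a + t • v) - t * ⟪gradient h a, v⟫ - L / 2 * ‖v‖ ^ 2 * t ^ 2
  have hφ : ∀ t, HasDerivAt φ (⟪gradient h (a + t • v) - gradient h a, v⟫ - L * ‖v‖ ^ 2 * t) t := by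
    intro t
    have hline : HasDerivAt (fun t : ℝ => a + t • v) v t := by
      simpa using ((hasDerivAt_id t).smul_const v).const_add a
    have hcomp := (hd (a + t • v)).hasFDerivAt.comp_hasDerivAt t hline
    rw [← inner_gradient_left] at hcomp
    refine ((hcomp.sub (hasDerivAt_mul_const _)).sub
      ((hasDerivAt_pow 2 t).const_mul _)).congr_deriv ?_
    rw [inner_sub_left]
    ring
  have hφ_nonpos (t : ℝ) (ht : 0 < t) :
      ⟪gradient h (a + t • v) - gradient h a, v⟫ - L * ‖v‖ ^ 2 * t ≤ 0 := by
    have : ⟪gradient h (a + t • v) - gradient h a, v⟫ ≤ L * ‖t • v‖ * ‖v‖ := by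
      calc _ ≤ ‖gradient h (a + t • v) - gradient h a‖ * ‖v‖ := real_inner_le_norm _ _
        _ ≤ L * ‖t • v‖ * ‖v‖ := by
          gcongr
          simpa using hlip (a + t • v) a
    rw [norm_smul, Real.norm_of_nonneg ht.le] at this
    linarith
  have hanti : AntitoneOn φ (Set.Icc 0 1) := by
    apply antitoneOn_of_deriv_nonpos (convex_Icc 0 1)
    · exact fun t _ => (hφ t).continuousAt.continuousWithinAt
    · exact fun t _ => (hφ t).differentiableAt.differentiableWithinAt
    · intro t ht
      rw [interior_Icc] at ht
      exact (hφ t).deriv ▸ hφ_nonpos t ht.1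
  have h10 : φ 1 ≤ φ 0 := hanti (by simp) (by simp) zero_le_one
  simp only [φ, one_smul, zero_smul, add_zero, add_sub_cancel, v] at h10
  linarith

theorem gradient_const_mul_sum {ι : Type*} (s : Finset ι) {f : ι → E → ℝ} {z : E}
    (hf : ∀ i ∈ s, DifferentiableAt ℝ (f i) z) (c : ℝ) :
    gradient (fun y => c * ∑ i ∈ s, f i y) z = c • ∑ i ∈ s, gradient (f i) z := by
  have hderiv := (HasFDerivAt.fun_sum fun i hi => (hf i hi).hasFDerivAt).const_mul c
  rw [gradient, hderiv.fderiv, map_smul, map_sum]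
  rfl

theorem sq_dist_inexact_gradient_step_le {F : E → ℝ} {μ L α : ℝ} {xstar : E} (hμ : 0 < μ)
    (hα : 0 ≤ α) (hd : Differentiable ℝ F)
    (hlip : ∀ p q, ‖gradient F p - gradient F q‖ ≤ L * ‖p - q‖)
    (hsc : ∀ x y, μ / 2 * ‖x - y‖ ^ 2 ≤ F x - F y - ⟪gradient F y, x - y⟫)
    (hmin : ∀ x, F xstar ≤ F x) (xbar g y : E) :
    ‖xbar - α • g - xstar‖ ^ 2 ≤
      (1 - μ / 2 * α) * ‖xbar - xstar‖ ^ 2 + α ^ 2 * ‖g‖ ^ 2 + 2 * α * (F xstar - F y) +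
        α * (L + 4 * L ^ 2 / μ) * ‖y - xbar‖ ^ 2 +
          α * (4 / μ) * ‖gradient F xbar - g‖ ^ 2 := by
  set A := ‖xbar - xstar‖
  set D := ‖y - xbar‖
  set e := ‖gradient F xbar - g‖
  have hgrad_min : gradient F xstar = 0 := by
    rw [gradient, IsLocalMin.fderiv_eq_zero (Filter.Eventually.of_forall hmin), map_zero]
  have hconvex : F xbar - F xstar + μ / 2 * A ^ 2 ≤ ⟪gradient F xbar, xbar - xstar⟫ := by
    have := hsc xstar xbar
    rw [norm_sub_rev, ← neg_sub xbar xstar, inner_neg_right] at this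
    linarith
  have hsmooth : F y ≤ F xbar + ⟪gradient F xbar, y - xbar⟫ + L / 2 * D ^ 2 :=
    le_add_inner_gradient_add_of_lipschitz_gradient hd hlip xbar y
  have hcross : ⟪gradient F xbar, y - xbar⟫ ≤ L * A * D := by
    calc _ ≤ ‖gradient F xbar - gradient F xstar‖ * D := by
          simpa [hgrad_min] using real_inner_le_norm (gradient F xbar) (y - xbar)
      _ ≤ L * A * D := by gcongr; exact hlip xbar xstar
  have herror : ⟪gradient F xbar - g, xbar - xstar⟫ ≤ e * A := real_inner_le_norm _ _
  have hexpand :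
      ‖xbar - α • g - xstar‖ ^ 2 = A ^ 2 - 2 * α * ⟪g, xbar - xstar⟫ + α ^ 2 * ‖g‖ ^ 2 := by
    rw [sub_right_comm, norm_sub_sq_real, inner_smul_right, norm_smul, Real.norm_eq_abs, mul_pow,
      sq_abs, real_inner_comm]
    ring
  have hsplit : ⟪g, xbar - xstar⟫ =
      ⟪gradient F xbar, xbar - xstar⟫ - ⟪gradient F xbar - g, xbar - xstar⟫ := by
    rw [inner_sub_left]
    ring
  have hyoung_cross : 2 * A * (L * D) ≤ μ / 4 * A ^ 2 + 4 * L ^ 2 / μ * D ^ 2 := by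
    convert two_mul_le_weighted_add_sq hμ A (L * D) using 2
    ring
  have hyoung_error := two_mul_le_weighted_add_sq hμ A e
  have hinner : -2 * ⟪g, xbar - xstar⟫ ≤ 2 * (F xstar - F y) - μ / 2 * A ^ 2 +
      (L + 4 * L ^ 2 / μ) * D ^ 2 + 4 / μ * e ^ 2 := by
    linarith
  rw [hexpand]
  linarith [mul_le_mul_of_nonneg_left hinner hα]

end Gradient

theorem descent_inequality_general
    (n d : ℕ) (hn : 0 < n) (μ L : ℝ) (hμ : 0 < μ)
    (f : Fin n → EuclideanSpace ℝ (Fin d) → ℝ)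
    (hdiff : ∀ i, Differentiable ℝ (f i))
    (hlip : ∀ i x y, ‖gradient (f i) x - gradient (f i) y‖ ≤ L * ‖x - y‖)
    (F : EuclideanSpace ℝ (Fin d) → ℝ) (hF : F = fun z => (n : ℝ)⁻¹ * ∑ i, f i z)
    (hsc : ∀ x y, μ / 2 * ‖x - y‖ ^ 2 ≤ F x - F y - ⟪gradient F y, x - y⟫)
    (xstar : EuclideanSpace ℝ (Fin d)) (hmin : ∀ x, F xstar ≤ F x)
    (x : Fin n → EuclideanSpace ℝ (Fin d))
    (xbar gbar : EuclideanSpace ℝ (Fin d))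
    (hgbar : gbar = (n : ℝ)⁻¹ • ∑ i, gradient (f i) (x i))
    (α : ℝ) (hα : 0 ≤ α) (l : Fin n) :
    ‖xbar - α • gbar - xstar‖ ^ 2 ≤
      (1 - μ / 2 * α) * ‖xbar - xstar‖ ^ 2 + α ^ 2 * ‖gbar‖ ^ 2 +
        2 * α * (F xstar - F (x l)) + α * (L + 4 * L ^ 2 / μ) * ‖x l - xbar‖ ^ 2 +
          α * (4 * L ^ 2 / μ) * ∑ i, ‖x i - xbar‖ ^ 2 := by
  have hF_diff : Differentiable ℝ F := by
    subst hF
    fun_prop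
  have hF_grad (z) : gradient F z = (n : ℝ)⁻¹ • ∑ i, gradient (f i) z := by
    subst hF
    exact gradient_const_mul_sum _ (fun i _ => (hdiff i).differentiableAt) _
  have hF_lip (p q) : ‖gradient F p - gradient F q‖ ≤ L * ‖p - q‖ := by
    have := norm_average_sub_average_le hlip (fun _ => p) (fun _ => q)
    rwa [Finset.sum_const, Finset.card_univ, Fintype.card_fin, nsmul_eq_mul,
      inv_mul_cancel_left₀ (by positivity), ← hF_grad, ← hF_grad] at this
  have herror : ‖gradient F xbar - gbar‖ ^ 2 ≤ L ^ 2 * ∑ i, ‖x i - xbar‖ ^ 2 := by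
    simpa only [hF_grad, hgbar, norm_sub_rev xbar] using
      sq_norm_average_sub_average_le hn hlip (fun _ => xbar) x
  have hstep := sq_dist_inexact_gradient_step_le hμ hα hF_diff hF_lip hsc hmin xbar gbar (x l)
  have herror_term : α * (4 / μ) * ‖gradient F xbar - gbar‖ ^ 2 ≤
      α * (4 * L ^ 2 / μ) * ∑ i, ‖x i - xbar‖ ^ 2 := by
    calc _ ≤ α * (4 / μ) * (L ^ 2 * ∑ i, ‖x i - xbar‖ ^ 2) := by gcongr
      _ = _ := by ring
  linarith

/-- **Deterministic descent inequality at the core of Lemma 2.**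
Let `f₁, …, f_n : ℝ^d → ℝ` be differentiable with `L`-Lipschitz gradients, and suppose
`f := (1/n)∑ᵢ fᵢ` is `μ`-strongly convex with minimizer `x*`.  For `x₁, …, x_n`, set
`x̄ = (1/n)∑ᵢ xᵢ` and `ḡ = (1/n)∑ᵢ ∇fᵢ(xᵢ)`.  Then for every `α ≥ 0` and every `l`:
`‖x̄ − αḡ − x*‖² ≤ (1 − (μ/2)α)‖x̄ − x*‖² + α²‖ḡ‖² + 2α(f(x*) − f(x_l))
  + α(L + 4L²/μ)‖x_l − x̄‖² + α(4L²/μ) ∑ᵢ ‖xᵢ − x̄‖²`. -/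
theorem descent_inequality
    (n d : ℕ) (hn : 0 < n) (μ L : ℝ) (hμ : 0 < μ) (hL : 0 < L)
    (f : Fin n → EuclideanSpace ℝ (Fin d) → ℝ)
    (hdiff : ∀ i, Differentiable ℝ (f i))
    (hlip : ∀ i x y, ‖gradient (f i) x - gradient (f i) y‖ ≤ L * ‖x - y‖)
    (F : EuclideanSpace ℝ (Fin d) → ℝ) (hF : F = fun z => (n : ℝ)⁻¹ * ∑ i, f i z)
    (hsc : ∀ x y, μ / 2 * ‖x - y‖ ^ 2 ≤ F x - F y - ⟪gradient F y, x - y⟫)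
    (xstar : EuclideanSpace ℝ (Fin d)) (hmin : ∀ x, F xstar ≤ F x)
    (x : Fin n → EuclideanSpace ℝ (Fin d))
    (xbar gbar : EuclideanSpace ℝ (Fin d))
    (hxbar : xbar = (n : ℝ)⁻¹ • ∑ i, x i)
    (hgbar : gbar = (n : ℝ)⁻¹ • ∑ i, gradient (f i) (x i))
    (α : ℝ) (hα : 0 ≤ α) (l : Fin n) :
    ‖xbar - α • gbar - xstar‖ ^ 2 ≤
      (1 - μ / 2 * α) * ‖xbar - xstar‖ ^ 2 + α ^ 2 * ‖gbar‖ ^ 2 +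
        2 * α * (F xstar - F (x l)) + α * (L + 4 * L ^ 2 / μ) * ‖x l - xbar‖ ^ 2 +
          α * (4 * L ^ 2 / μ) * ∑ i, ‖x i - xbar‖ ^ 2 :=
  descent_inequality_general n d hn μ L hμ f hdiff hlip F hF hsc xstar hmin x xbar gbar hgbar α hα l
end
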